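/- arXiv:1006.4607 — 6 statements merged into one kernel-verified Lean document; each statement's English description precedes it below -/
import Mathlib

section
/- Let X be a finite set, Y ⊆ X, and α : X × X → ℝ≥0 a set of nonnegative weights. For a (pseudo)metric d_Y on Y, let minext(d_Y, α) denote the infimum of ∑_{i,j∈X} α(i,j)·d_X(i,j) over all pseudometrics d_X on X extending d_Y (i.e., d_X(p,q) = d_Y(p,q) for all p,q ∈ Y). Then the function d_Y ↦ minext(d_Y, α) is convex: for pseudometrics d, d' on Y and λ ∈ [0,1], minext(λd + (1−λ)d', α) ≤ λ·minext(d, α) + (1−λ)·minext(d', α). -/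
def IsPseudometric {X : Type*} (d : X → X → ℝ) : Prop :=
  (∀ i j, 0 ≤ d i j) ∧ (∀ i j, d i j = d j i) ∧ (∀ i j k, d i k ≤ d i j + d j k)

noncomputable def minext {X : Type*} [Fintype X] (Y : Set X) (dY : Y → Y → ℝ)
    (α : X → X → ℝ) : ℝ :=
  sInf {v | ∃ dX : X → X → ℝ, IsPseudometric dX ∧ (∀ p q : Y, dX p q = dY p q) ∧
    v = ∑ i, ∑ j, α i j * dX i j}

lemma exists_ext {X : Type*} (Y : Set X) (d : Y → Y → ℝ) (hd : IsPseudometric d) :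
    ∃ dX : X → X → ℝ, IsPseudometric dX ∧ (∀ p q : Y, dX p q = d p q) := by
  classical
  by_cases hY : Nonempty Y
  · obtain ⟨y0⟩ := hY
    set f : X → Y := fun x => if h : x ∈ Y then ⟨x, h⟩ else y0 with hf
    have hfp : ∀ p : Y, f (p : X) = p := fun p => by simp [hf, p.2]
    exact ⟨fun i j => d (f i) (f j),
      ⟨fun i j => hd.1 _ _, fun i j => hd.2.1 _ _, fun i j k => hd.2.2 _ _ _⟩,
      fun p q => by dsimp only; rw [hfp, hfp]⟩
  · exact ⟨fun _ _ => 0, ⟨fun _ _ => le_refl 0, fun _ _ => rfl,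
      fun _ _ _ => by norm_num⟩, fun p _ => absurd ⟨p⟩ hY⟩

theorem stmt0 {X : Type*} [Fintype X] (Y : Set X) (α : X → X → ℝ)
    (hα : ∀ i j, 0 ≤ α i j) (d d' : Y → Y → ℝ)
    (hd : IsPseudometric d) (hd' : IsPseudometric d')
    (lam : ℝ) (h0 : 0 ≤ lam) (h1 : lam ≤ 1) :
    minext Y (fun p q => lam * d p q + (1 - lam) * d' p q) α ≤
      lam * minext Y d α + (1 - lam) * minext Y d' α := by
  set S : (Y → Y → ℝ) → Set ℝ := fun dY => {v | ∃ dX : X → X → ℝ,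
    IsPseudometric dX ∧ (∀ p q : Y, dX p q = dY p q) ∧
    v = ∑ i, ∑ j, α i j * dX i j} with hS
  have hbdd : ∀ dY, BddBelow (S dY) := by
    intro dY
    refine ⟨0, fun v hv => ?_⟩
    obtain ⟨dX, hX, -, rfl⟩ := hv
    exact Finset.sum_nonneg fun i _ => Finset.sum_nonneg fun j _ =>
      mul_nonneg (hα i j) (hX.1 i j)
  have hne : ∀ dY, IsPseudometric dY → (S dY).Nonempty := by
    intro dY hdY
    obtain ⟨dX, h1, h2⟩ := exists_ext Y dY hdY
    exact ⟨_, dX, h1, h2, rfl⟩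
  have hdc : IsPseudometric (fun p q => lam * d p q + (1 - lam) * d' p q) := by
    refine ⟨fun i j => add_nonneg (mul_nonneg h0 (hd.1 i j))
      (mul_nonneg (by linarith) (hd'.1 i j)), fun i j => by dsimp only; rw [hd.2.1, hd'.2.1],
      fun i j k => ?_⟩
    have t1 := hd.2.2 i j k
    have t2 := hd'.2.2 i j k
    dsimp only
    nlinarith
  have key : ∀ a ∈ S d, ∀ b ∈ S d',
      minext Y (fun p q => lam * d p q + (1 - lam) * d' p q) α ≤
        lam * a + (1 - lam) * b := by
    rintro a ⟨dX, hX, hXe, rfl⟩ b ⟨dX', hX', hXe', rfl⟩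
    have mem : (lam * ∑ i, ∑ j, α i j * dX i j +
        (1 - lam) * ∑ i, ∑ j, α i j * dX' i j) ∈
        S (fun p q => lam * d p q + (1 - lam) * d' p q) := by
      refine ⟨fun i j => lam * dX i j + (1 - lam) * dX' i j, ?_, ?_, ?_⟩
      · refine ⟨fun i j => add_nonneg (mul_nonneg h0 (hX.1 i j))
          (mul_nonneg (by linarith) (hX'.1 i j)),
          fun i j => by dsimp only; rw [hX.2.1, hX'.2.1], fun i j k => ?_⟩
        have t1 := hX.2.2 i j k
        have t2 := hX'.2.2 i j k
        dsimp only
        nlinarith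
      · intro p q; dsimp only; rw [hXe, hXe']
      · rw [Finset.mul_sum, Finset.mul_sum, ← Finset.sum_add_distrib]
        refine Finset.sum_congr rfl fun i _ => ?_
        rw [Finset.mul_sum, Finset.mul_sum, ← Finset.sum_add_distrib]
        exact Finset.sum_congr rfl fun j _ => by ring
    exact csInf_le (hbdd _) mem
  have hA := hne d hd
  have hB := hne d' hd'
  refine le_of_forall_pos_le_add fun ε hε => ?_
  obtain ⟨a, ha, hal⟩ := Real.lt_sInf_add_pos hA (half_pos hε)
  obtain ⟨b, hb, hbl⟩ := Real.lt_sInf_add_pos hB (half_pos hε)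
  have := key a ha b hb
  have hla : lam * a ≤ lam * (sInf (S d) + ε / 2) :=
    mul_le_mul_of_nonneg_left hal.le h0
  have hlb : (1 - lam) * b ≤ (1 - lam) * (sInf (S d') + ε / 2) :=
    mul_le_mul_of_nonneg_left hbl.le (by linarith)
  have heq : minext Y d α = sInf (S d) := rfl
  have heq' : minext Y d' α = sInf (S d') := rfl
  rw [heq, heq']
  nlinarith
end

section
/- Let X be a finite set, Y ⊆ X, and α : X × X → ℝ≥0 nonnegative weights. The minimum extension functional is monotone: if d and d' are pseudometrics on Y with d(p,q) ≥ d'(p,q) for all p,q ∈ Y, then minext(d, α) ≥ minext(d', α). -/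
lemma exists_ext_aux {X : Type*} [Fintype X] (Y : Set X) (y0 : Y) (d : Y → Y → ℝ)
    (hd : IsPseudometric d) :
    ∃ dX : X → X → ℝ, IsPseudometric dX ∧ ∀ p q : Y, dX p q = d p q := by
  classical
  set r : X → Y := fun i => if h : i ∈ Y then ⟨i, h⟩ else y0 with hr
  refine ⟨fun i j => d (r i) (r j),
    ⟨fun i j => hd.1 _ _, fun i j => hd.2.1 _ _, fun i j k => hd.2.2 _ (r j) _⟩, ?_⟩
  intro p q
  have key : ∀ p : Y, r ↑p = p := by
    intro p
    simp [hr, p.2]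
  simp only [key]

lemma construct_aux {X : Type*} [Fintype X] (Y : Set X) [Fintype Y] [Nonempty Y]
    (d d' : Y → Y → ℝ) (hd' : IsPseudometric d') (hdom : ∀ p q, d' p q ≤ d p q)
    (dX : X → X → ℝ) (hdX : IsPseudometric dX) (hext : ∀ p q : Y, dX p q = d p q) :
    ∃ D : X → X → ℝ, IsPseudometric D ∧ (∀ p q : Y, D p q = d' p q) ∧
      ∀ i j, D i j ≤ dX i j := by
  classical
  obtain ⟨hX0, hXs, hXt⟩ := hdX
  obtain ⟨h'0, h's, h't⟩ := hd'
  set h : X → X → ℝ := fun i j => if i = j then 0 else dX i j with hh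
  have h0 : ∀ i j, 0 ≤ h i j := by
    intro i j; simp only [hh]
    split
    · exact le_refl 0
    · exact hX0 i j
  have hle : ∀ i j, h i j ≤ dX i j := by
    intro i j; simp only [hh]
    split
    · rename_i heq; subst heq; exact hX0 i i
    · exact le_refl _
  have hsym : ∀ i j, h i j = h j i := by
    intro i j; simp only [hh]
    rw [eq_comm (a := i), hXs]
  have hdiag : ∀ i, h i i = 0 := by intro i; simp [hh]
  have htri : ∀ i j k, h i k ≤ h i j + h j k := by
    intro i j k
    have h0ij := h0 i j
    have h0jk := h0 j k
    by_cases hik : i = k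
    · have e1 : h i k = 0 := by rw [hik]; exact hdiag k
      linarith
    by_cases hij : i = j
    · have e1 : h i j = 0 := by rw [hij]; exact hdiag j
      have e2 : h i k = h j k := by rw [hij]
      linarith
    by_cases hjk : j = k
    · have e1 : h j k = 0 := by rw [hjk]; exact hdiag k
      have e2 : h i k = h i j := by rw [hjk]
      linarith
    have e1 : h i k = dX i k := by simp [hh, hik]
    have e2 : h i j = dX i j := by simp [hh, hij]
    have e3 : h j k = dX j k := by simp [hh, hjk]
    have := hXt i j k
    linarith
  -- key comparison lemmas on Y
  have hS : ∀ a b c : Y, d' a c ≤ d' a b + h ↑b ↑c := by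
    intro a b c
    by_cases hbc : (↑b : X) = ↑c
    · have hbc' : b = c := Subtype.ext hbc
      subst hbc'
      have : h ↑b ↑b = 0 := hdiag _
      linarith
    · have he : h ↑b ↑c = dX ↑b ↑c := by simp [hh, hbc]
      have h1 : dX ↑b ↑c = d b c := hext b c
      have h2 : d' b c ≤ d b c := hdom b c
      have h3 : d' a c ≤ d' a b + d' b c := h't a b c
      linarith
  have hS' : ∀ a b c : Y, d' a c ≤ h ↑a ↑b + d' b c := by
    intro a b c
    have t := hS c b a
    have e1 := h's a c
    have e2 := h's c b
    have e3 := hsym (↑b) (↑a)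
    linarith
  have hne : (Finset.univ : Finset (Y × Y)).Nonempty := Finset.univ_nonempty
  set B : X → X → ℝ := fun i j =>
    (Finset.univ : Finset (Y × Y)).inf' hne (fun ab => h i ↑ab.1 + d' ab.1 ab.2 + h ↑ab.2 j)
    with hB
  have Ble : ∀ i j (a b : Y), B i j ≤ h i ↑a + d' a b + h ↑b j := by
    intro i j a b
    exact Finset.inf'_le _ (Finset.mem_univ (a, b))
  have Bge : ∀ i j (c : ℝ), (∀ a b : Y, c ≤ h i ↑a + d' a b + h ↑b j) → c ≤ B i j := by
    intro i j c hc
    exact Finset.le_inf' _ _ (fun ab _ => hc ab.1 ab.2)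
  have Bex : ∀ i j, ∃ a b : Y, B i j = h i ↑a + d' a b + h ↑b j := by
    intro i j
    obtain ⟨ab, _, hab⟩ := Finset.exists_mem_eq_inf' hne
      (fun ab : Y × Y => h i ↑ab.1 + d' ab.1 ab.2 + h ↑ab.2 j)
    exact ⟨ab.1, ab.2, hab⟩
  set D : X → X → ℝ := fun i j => min (dX i j) (B i j) with hD
  have B0 : ∀ i j, 0 ≤ B i j := by
    intro i j
    apply Bge
    intro a b
    have := h0 i ↑a; have := h'0 a b; have := h0 (↑b) j
    linarith
  have Bsymm : ∀ i j, B i j = B j i := by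
    intro i j
    apply le_antisymm
    · apply Bge
      intro a b
      have t := Ble i j b a
      have e1 := hsym i (↑b)
      have e2 := hsym (↑a) j
      have e3 := h's b a
      linarith
    · apply Bge
      intro a b
      have t := Ble j i b a
      have e1 := hsym j (↑b)
      have e2 := hsym (↑a) i
      have e3 := h's b a
      linarith
  refine ⟨D, ⟨?_, ?_, ?_⟩, ?_, ?_⟩
  · intro i j
    exact le_min (hX0 i j) (B0 i j)
  · intro i j
    simp only [hD]
    rw [hXs i j, Bsymm i j]
  · -- triangle inequality
    intro i j k
    have case1 : dX i k ≥ D i k := min_le_left _ _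
    have case2 : B i k ≥ D i k := min_le_right _ _
    rcases min_cases (dX i j) (B i j) with ⟨e1, le1⟩ | ⟨e1, le1⟩ <;>
      rcases min_cases (dX j k) (B j k) with ⟨e2, le2⟩ | ⟨e2, le2⟩
    · rw [hD]; simp only [e1, e2]
      calc D i k ≤ dX i k := case1
        _ ≤ dX i j + dX j k := hXt i j k
    · simp only [hD, e1, e2]
      obtain ⟨a, b, hab⟩ := Bex j k
      rw [hab]
      have t1 : D i k ≤ h i ↑a + d' a b + h ↑b k := le_trans case2 (Ble i k a b)
      have t2 : h i ↑a ≤ h i j + h j ↑a := htri i j ↑a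
      have t3 : h i j ≤ dX i j := hle i j
      linarith
    · simp only [hD, e1, e2]
      obtain ⟨a, b, hab⟩ := Bex i j
      rw [hab]
      have t1 : D i k ≤ h i ↑a + d' a b + h ↑b k := le_trans case2 (Ble i k a b)
      have t2 : h ↑b k ≤ h ↑b j + h j k := htri (↑b) j k
      have t3 : h j k ≤ dX j k := hle j k
      linarith
    · simp only [hD, e1, e2]
      obtain ⟨a, b, hab⟩ := Bex i j
      obtain ⟨r, s, hrs⟩ := Bex j k
      rw [hab, hrs]
      have t1 : D i k ≤ h i ↑a + d' a s + h ↑s k := le_trans case2 (Ble i k a s)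
      have t2 : h ↑b ↑r ≤ h ↑b j + h j ↑r := htri (↑b) j ↑r
      have t3 : d' a r ≤ d' a b + h ↑b ↑r := hS a b r
      have t4 : d' a s ≤ d' a r + d' r s := h't a r s
      linarith
  · -- values on Y
    intro p q
    apply le_antisymm
    · have t1 : D ↑p ↑q ≤ B ↑p ↑q := min_le_right _ _
      have t2 : B ↑p ↑q ≤ h ↑p ↑p + d' p q + h ↑q ↑q := Ble (↑p) (↑q) p q
      have t3 : h ↑p ↑p = 0 := by simp [hh]
      have t4 : h ↑q ↑q = 0 := by simp [hh]
      linarith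
    · apply le_min
      · rw [hext p q]; exact hdom p q
      · apply Bge
        intro a b
        have t1 : d' p b ≤ h ↑p ↑a + d' a b := hS' p a b
        have t2 : d' p q ≤ d' p b + h ↑b ↑q := hS p b q
        linarith
  · intro i j
    exact min_le_left _ _

theorem stmt1 {X : Type*} [Fintype X] (Y : Set X) (α : X → X → ℝ)
    (hα : ∀ i j, 0 ≤ α i j) (d d' : Y → Y → ℝ)
    (hd : IsPseudometric d) (hd' : IsPseudometric d')
    (hdom : ∀ p q : Y, d' p q ≤ d p q) :
    minext Y d' α ≤ minext Y d α := by
  classical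
  rcases Y.eq_empty_or_nonempty with hY | hY
  · subst hY
    have key : ∀ e e' : ((∅ : Set X)) → ((∅ : Set X)) → ℝ,
        minext (∅ : Set X) e α = minext (∅ : Set X) e' α := by
      intro e e'
      unfold minext
      congr 1
      ext v
      simp only [Set.mem_setOf_eq]
      constructor <;> rintro ⟨dX, h1, _, h3⟩ <;>
        exact ⟨dX, h1, fun p _ => absurd p.2 (Set.notMem_empty _), h3⟩
    exact (key d' d).le
  · obtain ⟨y0, hy0⟩ := hY
    haveI : Fintype Y := Fintype.ofFinite _
    haveI : Nonempty Y := ⟨⟨y0, hy0⟩⟩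
    unfold minext
    set S := {v | ∃ dX : X → X → ℝ, IsPseudometric dX ∧ (∀ p q : Y, dX p q = d p q) ∧
      v = ∑ i, ∑ j, α i j * dX i j} with hS
    set T := {v | ∃ dX : X → X → ℝ, IsPseudometric dX ∧ (∀ p q : Y, dX p q = d' p q) ∧
      v = ∑ i, ∑ j, α i j * dX i j} with hT
    have hSne : S.Nonempty := by
      obtain ⟨dX, h1, h2⟩ := exists_ext_aux Y ⟨y0, hy0⟩ d hd
      exact ⟨_, dX, h1, h2, rfl⟩
    have hTbdd : BddBelow T := by
      refine ⟨0, ?_⟩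
      rintro v ⟨dX, h1, _, rfl⟩
      apply Finset.sum_nonneg
      intro i _
      apply Finset.sum_nonneg
      intro j _
      exact mul_nonneg (hα i j) (h1.1 i j)
    apply le_csInf hSne
    rintro v ⟨dX, h1, h2, rfl⟩
    obtain ⟨D, hD1, hD2, hD3⟩ := construct_aux Y d d' hd' hdom dX h1 h2
    have hmem : (∑ i, ∑ j, α i j * D i j) ∈ T := ⟨D, hD1, hD2, rfl⟩
    refine le_trans (csInf_le hTbdd hmem) ?_
    apply Finset.sum_le_sum
    intro i _
    apply Finset.sum_le_sum
    intro j _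
    exact mul_le_mul_of_nonneg_left (hD3 i j) (hα i j)
end

section
/- Let L be a finite-dimensional normed space of dimension d with a symmetric basis f_1, …, f_d, meaning that ‖∑ c_i f_i‖ = ‖∑ δ_i c_{π(i)} f_i‖ for all coefficients c ∈ ℝ^d, all sign vectors δ ∈ {±1}^d, and all permutations π of {1,…,d}. Then the Banach–Mazur distance between L and ℓ₁^d satisfies d_BM(L, ℓ₁^d) ≤ d·‖f_1‖ / ‖f_1 + ⋯ + f_d‖. -/
open scoped ENNReal NNReal

/-!
Take `T` to be the coordinate map of the basis, viewed as a map `L → ℓ₁^d`. The triangle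
inequality and the fact that all `f i` have the same norm give `‖T⁻¹‖ ≤ ‖f₁‖`. For `‖T‖`, the
`d` cyclic shifts of the coefficients of `x = ∑ cᵢ fᵢ` sum to `(∑ cᵢ) • ∑ fᵢ` and all have norm
`‖x‖`, so `|∑ cᵢ| ‖∑ fᵢ‖ ≤ d ‖x‖`; flipping signs first makes every `cᵢ` nonnegative, which
turns this into `‖c‖₁ ‖∑ fᵢ‖ ≤ d ‖x‖`, i.e. `‖T‖ ≤ d / ‖∑ fᵢ‖`.
-/

noncomputable def dBM (U V : Type*) [NormedAddCommGroup U] [NormedSpace ℝ U]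
    [NormedAddCommGroup V] [NormedSpace ℝ V] : ℝ≥0∞ :=
  ⨅ T : U ≃L[ℝ] V, (‖(T : U →L[ℝ] V)‖₊ : ℝ≥0∞) * (‖(T.symm : V →L[ℝ] U)‖₊ : ℝ≥0∞)

theorem dBM_le_ofReal_mul {U V : Type*} [NormedAddCommGroup U] [NormedSpace ℝ U]
    [NormedAddCommGroup V] [NormedSpace ℝ V] (T : U ≃L[ℝ] V) {a b : ℝ}
    (ha : ‖(T : U →L[ℝ] V)‖ ≤ a) (hb : ‖(T.symm : V →L[ℝ] U)‖ ≤ b) :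
    dBM U V ≤ ENNReal.ofReal (a * b) := by
  refine (iInf_le _ T).trans ?_
  rw [← ENNReal.ofReal_coe_nnreal, ← ENNReal.ofReal_coe_nnreal, coe_nnnorm, coe_nnnorm,
    ← ENNReal.ofReal_mul (norm_nonneg _)]
  exact ENNReal.ofReal_le_ofReal (mul_le_mul ha hb (norm_nonneg _) ((norm_nonneg _).trans ha))

theorem Module.Basis.sum_ne_zero {ι R M : Type*} [Fintype ι] [Nonempty ι] [Semiring R]
    [Nontrivial R] [AddCommMonoid M] [Module R M] (b : Module.Basis ι R M) : ∑ i, b i ≠ 0 := by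
  intro h
  have := b.repr_sum_self 1
  simp [h] at this

namespace Module.Basis

variable {ι L : Type*} [Fintype ι] [NormedAddCommGroup L] [NormedSpace ℝ L]

noncomputable def l1Equiv (f : Module.Basis ι ℝ L) : L ≃L[ℝ] PiLp 1 (fun _ : ι => ℝ) :=
  haveI := Module.Finite.of_basis f
  (f.equivFun.trans (WithLp.linearEquiv 1 ℝ (ι → ℝ)).symm).toContinuousLinearEquiv

variable (f : Module.Basis ι ℝ L)

theorem l1Equiv_apply (x : L) (i : ι) : f.l1Equiv x i = f.repr x i := rfl

theorem l1Equiv_symm_apply (c : PiLp 1 (fun _ : ι => ℝ)) :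
    f.l1Equiv.symm c = ∑ i, c i • f i :=
  f.equivFun_symm_apply c

theorem norm_l1Equiv_apply (x : L) : ‖f.l1Equiv x‖ = ∑ i, |f.repr x i| := by
  simp [PiLp.norm_eq_of_L1, l1Equiv_apply]

end Module.Basis

section SymmetricFamily

variable {ι L : Type*} [Fintype ι] [NormedAddCommGroup L] [NormedSpace ℝ L]

def IsSymmetricFamily (f : ι → L) : Prop :=
  ∀ (c : ι → ℝ) (δ : ι → ℝ), (∀ i, δ i = 1 ∨ δ i = -1) →
    ∀ π : Equiv.Perm ι, ‖∑ i, c i • f i‖ = ‖∑ i, (δ i * c (π i)) • f i‖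

namespace IsSymmetricFamily

section

variable {f : ι → L} (hf : IsSymmetricFamily f)
include hf

theorem norm_sum_comp_perm (c : ι → ℝ) (π : Equiv.Perm ι) :
    ‖∑ i, c (π i) • f i‖ = ‖∑ i, c i • f i‖ := by
  simpa using (hf c 1 (fun _ => Or.inl rfl) π).symm

theorem norm_sum_abs_smul (c : ι → ℝ) :
    ‖∑ i, |c i| • f i‖ = ‖∑ i, c i • f i‖ := by
  have hsign (i : ι) : (if 0 ≤ c i then 1 else -1) * c i = |c i| := by
    split_ifs with h
    · rw [one_mul, abs_of_nonneg h]
    · rw [neg_one_mul, abs_of_neg (not_le.mp h)]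
  have := hf c (fun i => if 0 ≤ c i then 1 else -1) (fun i => by split_ifs <;> simp) 1
  simpa only [Equiv.Perm.coe_one, id, hsign] using this.symm

theorem norm_eq (i j : ι) : ‖f i‖ = ‖f j‖ := by
  classical
  simpa [Pi.single_apply, Equiv.swap_apply_eq_iff] using
    (hf.norm_sum_comp_perm (Pi.single i 1) (Equiv.swap i j)).symm

theorem norm_sum_smul_le (c : ι → ℝ) (j : ι) :
    ‖∑ i, c i • f i‖ ≤ ‖f j‖ * ∑ i, |c i| :=
  calc ‖∑ i, c i • f i‖ ≤ ∑ i, ‖c i • f i‖ := norm_sum_le _ _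
    _ = ‖f j‖ * ∑ i, |c i| := by
      simp only [norm_smul, Real.norm_eq_abs, hf.norm_eq _ j, Finset.mul_sum, mul_comm]

end

section Cyclic

variable {d : ℕ} [NeZero d] {f : Fin d → L} (hf : IsSymmetricFamily f)
include hf

theorem abs_sum_mul_norm_sum_le (c : Fin d → ℝ) :
    |∑ i, c i| * ‖∑ i, f i‖ ≤ d * ‖∑ i, c i • f i‖ := by
  have hshift : (∑ i, c i) • ∑ i, f i = ∑ k : Fin d, ∑ i, c (i + k) • f i := by
    rw [Finset.sum_comm, Finset.smul_sum]
    refine Finset.sum_congr rfl fun i _ => ?_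
    rw [← Finset.sum_smul,
      Fintype.sum_equiv (Equiv.addLeft i) (fun k => c (i + k)) c fun _ => rfl]
  calc |∑ i, c i| * ‖∑ i, f i‖ = ‖∑ k : Fin d, ∑ i, c (i + k) • f i‖ := by
        rw [← hshift, norm_smul, Real.norm_eq_abs]
    _ ≤ ∑ k : Fin d, ‖∑ i, c (i + k) • f i‖ := norm_sum_le _ _
    _ = ∑ k : Fin d, ‖∑ i, c i • f i‖ :=
        Finset.sum_congr rfl fun k _ => hf.norm_sum_comp_perm c (Equiv.addRight k)
    _ = d * ‖∑ i, c i • f i‖ := by simp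

theorem sum_abs_mul_norm_sum_le (c : Fin d → ℝ) :
    (∑ i, |c i|) * ‖∑ i, f i‖ ≤ d * ‖∑ i, c i • f i‖ := by
  have hnonneg : 0 ≤ ∑ i, |c i| := Finset.sum_nonneg fun i _ => abs_nonneg (c i)
  simpa only [hf.norm_sum_abs_smul, abs_of_nonneg hnonneg] using
    hf.abs_sum_mul_norm_sum_le fun i => |c i|

end Cyclic

theorem norm_l1Equiv_symm_le {f : Module.Basis ι ℝ L} (hf : IsSymmetricFamily ⇑f) (j : ι) :
    ‖(f.l1Equiv.symm : PiLp 1 (fun _ : ι => ℝ) →L[ℝ] L)‖ ≤ ‖f j‖ :=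
  ContinuousLinearMap.opNorm_le_bound _ (norm_nonneg _) fun c => by
    simpa only [ContinuousLinearEquiv.coe_coe, f.l1Equiv_symm_apply, PiLp.norm_eq_of_L1,
      Real.norm_eq_abs] using hf.norm_sum_smul_le c j

theorem norm_l1Equiv_le {d : ℕ} [NeZero d] {f : Module.Basis (Fin d) ℝ L}
    (hf : IsSymmetricFamily ⇑f) :
    ‖(f.l1Equiv : L →L[ℝ] PiLp 1 (fun _ : Fin d => ℝ))‖ ≤ d / ‖∑ i, f i‖ := by
  have hsum : 0 < ‖∑ i, f i‖ := norm_pos_iff.mpr f.sum_ne_zero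
  refine ContinuousLinearMap.opNorm_le_bound _ (by positivity) fun x => ?_
  rw [ContinuousLinearEquiv.coe_coe, f.norm_l1Equiv_apply, div_mul_eq_mul_div,
    le_div_iff₀ hsum]
  simpa only [f.sum_repr] using hf.sum_abs_mul_norm_sum_le (f.repr x)

end IsSymmetricFamily

end SymmetricFamily

theorem stmt5 {L : Type*} [NormedAddCommGroup L] [NormedSpace ℝ L]
    (d : ℕ) (hd : 0 < d) (f : Module.Basis (Fin d) ℝ L)
    (hsym : ∀ (c : Fin d → ℝ) (δ : Fin d → ℝ), (∀ i, δ i = 1 ∨ δ i = -1) →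
      ∀ π : Equiv.Perm (Fin d),
        ‖∑ i, c i • f i‖ = ‖∑ i, (δ i * c (π i)) • f i‖) :
    dBM L (PiLp 1 fun _ : Fin d => ℝ) ≤
      ENNReal.ofReal ((d : ℝ) * ‖f ⟨0, hd⟩‖ / ‖∑ i, f i‖) := by
  have : NeZero d := ⟨hd.ne'⟩
  have hf : IsSymmetricFamily ⇑f := hsym
  rw [← div_mul_eq_mul_div]
  exact dBM_le_ofReal_mul f.l1Equiv hf.norm_l1Equiv_le (hf.norm_l1Equiv_symm_le _)
end

section
/- Let X be a metric space and V a finite-dimensional normed space, and let Z ⊆ X be a finite subset with |Z| = k. Suppose K ≥ 0 is such that for every finite set Z̃ with Z ⊆ Z̃ ⊆ X, every map f : Z → V admits an extension f̃ : Z̃ → V with ‖f̃‖_Lip ≤ K‖f‖_Lip. Then every Lipschitz map f : Z → V admits an extension f̂ : X → V with ‖f̂‖_Lip ≤ K‖f‖_Lip. -/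
/-!
Extensions to finite supersets of `Z` can be chosen with values in the closed balls
`closedBall (f z₀) (K * C * dist x z₀)`. The product of these balls is compact by Tychonoff's
theorem, and inside it the maps that extend `f` and are `K * C`-Lipschitz on a given finite set
form closed sets with the finite intersection property. A map in all of them is the extension.
-/

open scoped NNReal
open Metric Set

theorem exists_lipschitzWith_extension_of_forall_finset {X V : Type*} [PseudoEMetricSpace X]
    [MetricSpace V] [ProperSpace V] {K : ℝ≥0} {Z : Set X} (f : Z → V) (c : V) (r : X → ℝ)
    (h : ∀ s : Finset X, ∃ g : X → V, (∀ x, g x ∈ closedBall c (r x)) ∧ (∀ z : Z, g z = f z) ∧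
      LipschitzOnWith K g s) :
    ∃ g : X → V, (∀ z : Z, g z = f z) ∧ LipschitzWith K g := by
  classical
  set E : Set (X → V) := {g | ∀ z : Z, g z = f z}
  have hE : IsClosed E := by
    simp only [E, ofPred_forall]
    exact isClosed_iInter fun z => isClosed_eq (continuous_apply _) continuous_const
  set t : Finset X → Set (X → V) := fun s => E ∩ {g | LipschitzOnWith K g s}
  have hB : IsCompact (univ.pi fun x => closedBall c (r x)) :=
    isCompact_univ_pi fun x => isCompact_closedBall c (r x)
  obtain ⟨g, -, hg⟩ := hB.inter_iInter_nonempty t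
    (fun s => hE.inter (isClosed_setOfPred_lipschitzOnWith K _)) fun u => by
      obtain ⟨g, hgB, hgE, hgL⟩ := h (u.sup id)
      refine ⟨g, fun x _ => hgB x, mem_iInter₂.2 fun s hs => ⟨hgE, hgL.mono ?_⟩⟩
      exact_mod_cast Finset.le_sup (f := id) hs
  rw [mem_iInter] at hg
  refine ⟨g, (hg ∅).1, fun x y => (hg {x, y}).2 ?_ ?_⟩ <;> simp

theorem LipschitzWith.exists_extend_mem_closedBall {X V : Type*} [PseudoMetricSpace X]
    [PseudoMetricSpace V] {K : ℝ≥0} {S : Set X} {g : S → V} (hg : LipschitzWith K g) (z₀ : S) :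
    ∃ g' : X → V, (∀ x : S, g' x = g x) ∧ LipschitzOnWith K g' S ∧
      ∀ x : X, g' x ∈ closedBall (g z₀) (K * dist x z₀) := by
  set g' := Function.extend Subtype.val g fun _ => g z₀
  have hg'S : ∀ x : S, g' x = g x := Subtype.val_injective.extend_apply _ _
  refine ⟨g', hg'S, ?_, fun x => ?_⟩
  · rw [lipschitzOnWith_iff_restrict]
    convert hg
    exact funext hg'S
  · by_cases hx : x ∈ S
    · rw [mem_closedBall, show g' x = g ⟨x, hx⟩ from hg'S ⟨x, hx⟩]
      exact hg.dist_le_mul ⟨x, hx⟩ z₀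
    · have hx' : ¬∃ y : S, (y : X) = x := fun ⟨y, hy⟩ => hx (hy ▸ y.2)
      rw [show g' x = g z₀ from Function.extend_apply' _ _ _ hx']
      exact mem_closedBall_self (by positivity)

theorem stmt9_general {X V : Type*} [MetricSpace X] [NormedAddCommGroup V] [NormedSpace ℝ V]
    [FiniteDimensional ℝ V] (Z : Set X) (hZfin : Z.Finite)
    (K : ℝ≥0)
    (hext : ∀ Z' : Set X, Z'.Finite → Z ⊆ Z' →
      ∀ (f : Z → V) (C : ℝ≥0), LipschitzWith C f →
        ∃ g : Z' → V, (∀ (z : Z') (hz : (z : X) ∈ Z), g z = f ⟨z, hz⟩) ∧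
          LipschitzWith (K * C) g) :
    ∀ (f : Z → V) (C : ℝ≥0), LipschitzWith C f →
      ∃ g : X → V, (∀ z : Z, g z = f z) ∧ LipschitzWith (K * C) g := by
  intro f C hf
  rcases Z.eq_empty_or_nonempty with hZ | ⟨z₀, hz₀⟩
  · have : IsEmpty Z := isEmpty_coe_sort.2 hZ
    exact ⟨fun _ => 0, isEmptyElim, LipschitzWith.const' 0⟩
  refine exists_lipschitzWith_extension_of_forall_finset f (f ⟨z₀, hz₀⟩)
    (fun x => (K * C : ℝ≥0) * dist x z₀) fun s => ?_
  obtain ⟨G, hGf, hG⟩ := hext _ (hZfin.union s.finite_toSet) subset_union_left f C hf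
  have hz₀' : z₀ ∈ Z ∪ s := subset_union_left hz₀
  obtain ⟨g, hgG, hgL, hgB⟩ := hG.exists_extend_mem_closedBall ⟨z₀, hz₀'⟩
  refine ⟨g, ?_, fun z => ?_, hgL.mono subset_union_right⟩
  · simpa only [hGf ⟨z₀, hz₀'⟩ hz₀] using hgB
  · rw [hgG ⟨z, subset_union_left z.2⟩, hGf _ z.2]

theorem stmt9 {X V : Type*} [MetricSpace X] [NormedAddCommGroup V] [NormedSpace ℝ V]
    [FiniteDimensional ℝ V] (k : ℕ) (Z : Set X) (hZfin : Z.Finite) (hZk : Z.ncard = k)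
    (K : ℝ≥0)
    (hext : ∀ Z' : Set X, Z'.Finite → Z ⊆ Z' →
      ∀ (f : Z → V) (C : ℝ≥0), LipschitzWith C f →
        ∃ g : Z' → V, (∀ (z : Z') (hz : (z : X) ∈ Z), g z = f ⟨z, hz⟩) ∧
          LipschitzWith (K * C) g) :
    ∀ (f : Z → V) (C : ℝ≥0), LipschitzWith C f →
      ∃ g : X → V, (∀ z : Z, g z = f z) ∧ LipschitzWith (K * C) g :=
  stmt9_general Z hZfin K hext
end

section
/- Fix integers m > 0 and d = m². Let S be the set of vectors in {−1, 0, 1}^d having exactly m nonzero coordinates. For fixed A ∈ S and B chosen uniformly at random from S, the probability that |⟨A, B⟩| = 1 (i.e., the supports of A and B overlap in exactly one coordinate) is at least some positive constant independent of m (in fact at least 1/e asymptotically, and bounded below by a universal constant c > 0 for all m ≥ 1). -/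
/-!
A vector in `{-1, 0, 1}^d` is determined by its support `s` and one of `2 ^ #s` sign patterns, so
both `Svec m` and its subset of vectors whose support meets `supp A` in exactly one coordinate are
`2 ^ m` times the number of admissible supports. There are `C(m², m)` supports of size `m`, and
`m · C(m² - m, m - 1)` of them meet the `m`-set `supp A` in a single point. The ratio of these
two counts is at most `((m / (m - 1)) ^ (m - 1)) ^ 2 ≤ e² < 8`, by the elementary bounds
`n ^ r / r! ≥ C(n, r) ≥ (n + 1 - r) ^ r / r!`.
-/

def Svec (m : ℕ) : Finset (Fin (m ^ 2) → ℤ) :=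
  (Fintype.piFinset fun _ => ({-1, 0, 1} : Finset ℤ)).filter
    fun A => (Finset.univ.filter fun i => A i ≠ 0).card = m

open Finset Real

section SignVectors

variable {ι : Type*} [Fintype ι] [DecidableEq ι]

theorem card_filter_support_eq (s : Finset ι) :
    #{A ∈ Fintype.piFinset (fun _ : ι => ({-1, 0, 1} : Finset ℤ)) |
      ({i | A i ≠ 0} : Finset ι) = s} = 2 ^ #s := by
  have : {A ∈ Fintype.piFinset (fun _ : ι => ({-1, 0, 1} : Finset ℤ)) |
      ({i | A i ≠ 0} : Finset ι) = s} =
      Fintype.piFinset fun i => if i ∈ s then ({-1, 1} : Finset ℤ) else {0} := by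
    ext A
    simp only [mem_filter, Fintype.mem_piFinset, Finset.ext_iff, mem_univ, true_and,
      ← forall_and]
    refine forall_congr' fun i => ?_
    split_ifs with h <;> simp [h] <;> omega
  rw [this, Fintype.card_piFinset]
  simp [apply_ite]

theorem card_filter_support_mem (t : Finset (Finset ι)) :
    #{A ∈ Fintype.piFinset (fun _ : ι => ({-1, 0, 1} : Finset ℤ)) |
      ({i | A i ≠ 0} : Finset ι) ∈ t} = ∑ s ∈ t, 2 ^ #s := by
  rw [card_eq_sum_card_fiberwise (f := fun A : ι → ℤ => ({i | A i ≠ 0} : Finset ι)) (t := t) ?_]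
  · refine sum_congr rfl fun s hs => ?_
    rw [filter_filter, ← card_filter_support_eq s]
    congr 1
    exact filter_congr fun A _ => ⟨And.right, fun h => ⟨h ▸ hs, h⟩⟩
  · exact fun A hA => (mem_filter.1 hA).2

theorem card_filter_card_inter_eq (a : Finset ι) (j l : ℕ) :
    #{s ∈ powersetCard (j + l) (univ : Finset ι) | #(a ∩ s) = j} =
      (#a).choose j * (Fintype.card ι - #a).choose l := by
  rw [← card_compl, ← card_powersetCard, ← card_powersetCard, ← card_product]
  symm
  apply card_nbij' (fun p => p.1 ∪ p.2) (fun s => (a ∩ s, s \ a))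
  · rintro ⟨t, u⟩ h
    simp only [coe_product, Set.mem_prod, mem_coe, mem_powersetCard,
      subset_compl_iff_disjoint_left] at h
    obtain ⟨⟨hta, rfl⟩, hau, rfl⟩ := h
    simp [card_union_of_disjoint (hau.mono_left hta), inter_union_distrib_left,
      inter_eq_right.2 hta, disjoint_iff_inter_eq_empty.1 hau]
  · intro s hs
    simp only [coe_filter, mem_powersetCard_univ, Set.mem_ofPred_eq] at hs
    have hsplit := card_inter_add_card_sdiff s a
    rw [inter_comm] at hsplit
    simp only [coe_product, Set.mem_prod, mem_coe, mem_powersetCard, inter_subset_left, hs.2,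
      and_self, subset_compl_iff_disjoint_left, disjoint_sdiff, true_and]
    omega
  · rintro ⟨t, u⟩ h
    simp only [coe_product, Set.mem_prod, mem_coe, mem_powersetCard,
      subset_compl_iff_disjoint_left] at h
    simp [inter_union_distrib_left, inter_eq_right.2 h.1.1, disjoint_iff_inter_eq_empty.1 h.2.1,
      union_sdiff_distrib, sdiff_eq_empty_iff_subset.2 h.1.1, h.2.1.symm]
  · intro s _
    simpa [inter_comm a] using sup_inf_sdiff s a

end SignVectors

theorem Svec_eq_filter_support_mem (m : ℕ) :
    Svec m = {A ∈ Fintype.piFinset (fun _ : Fin (m ^ 2) => ({-1, 0, 1} : Finset ℤ)) |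
      ({i | A i ≠ 0} : Finset (Fin (m ^ 2))) ∈ powersetCard m univ} := by
  simp only [Svec, mem_powersetCard_univ]

theorem card_Svec (m : ℕ) : #(Svec m) = (m ^ 2).choose m * 2 ^ m := by
  rw [Svec_eq_filter_support_mem, card_filter_support_mem,
    sum_const_nat fun s hs => by rw [(mem_powersetCard_univ.1 hs)], card_powersetCard, card_univ,
    Fintype.card_fin]

theorem card_filter_Svec_card_inter_support_eq_one {m : ℕ} (hm : 1 ≤ m) {A : Fin (m ^ 2) → ℤ}
    (hA : A ∈ Svec m) :
    #{B ∈ Svec m | #({i | A i ≠ 0 ∧ B i ≠ 0} : Finset (Fin (m ^ 2))) = 1} =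
      m * (m ^ 2 - m).choose (m - 1) * 2 ^ m := by
  set a : Finset (Fin (m ^ 2)) := {i | A i ≠ 0}
  have ha : #a = m := (mem_filter.1 hA).2
  have hfilter : {B ∈ Svec m | #({i | A i ≠ 0 ∧ B i ≠ 0} : Finset (Fin (m ^ 2))) = 1} =
      {B ∈ Fintype.piFinset (fun _ : Fin (m ^ 2) => ({-1, 0, 1} : Finset ℤ)) |
        ({i | B i ≠ 0} : Finset (Fin (m ^ 2))) ∈
          {s ∈ powersetCard m (univ : Finset (Fin (m ^ 2))) | #(a ∩ s) = 1}} := by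
    rw [Svec_eq_filter_support_mem, filter_filter]
    simp only [mem_filter, filter_and, a]
  rw [hfilter, card_filter_support_mem, sum_const_nat fun s hs => by
    rw [(mem_powersetCard_univ.1 (mem_filter.1 hs).1)]]
  obtain ⟨n, rfl⟩ := Nat.exists_eq_add_of_le' hm
  have hcount := card_filter_card_inter_eq a 1 n
  rw [add_comm 1 n] at hcount
  rw [hcount, ha, Nat.choose_one_right, Fintype.card_fin, Nat.add_sub_cancel]

theorem add_one_pow_le_exp_one_mul_pow (n : ℕ) : ((n : ℝ) + 1) ^ n ≤ exp 1 * n ^ n := by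
  rcases Nat.eq_zero_or_pos n with rfl | hn
  · simp
  have hn' : (0 : ℝ) < n := by exact_mod_cast hn
  have h : (n : ℝ) + 1 ≤ n * exp (1 / n) := by
    have := add_one_le_exp (1 / (n : ℝ))
    rw [div_add_one hn'.ne', div_le_iff₀ hn'] at this
    linarith
  calc ((n : ℝ) + 1) ^ n ≤ (n * exp (1 / n)) ^ n := by gcongr
    _ = exp 1 * n ^ n := by
      rw [mul_pow, ← exp_nat_mul, mul_one_div_cancel hn'.ne', mul_comm]

theorem add_one_pow_two_mul_le_eight_mul (n : ℕ) : ((n : ℝ) + 1) ^ (2 * n) ≤ 8 * (n : ℝ) ^ (2 * n) := by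
  have he : exp 1 ^ 2 ≤ 8 := by nlinarith [exp_one_lt_d9, exp_pos 1]
  calc ((n : ℝ) + 1) ^ (2 * n) = (((n : ℝ) + 1) ^ n) ^ 2 := by ring
    _ ≤ (exp 1 * n ^ n) ^ 2 := by gcongr; exact add_one_pow_le_exp_one_mul_pow n
    _ = exp 1 ^ 2 * (n : ℝ) ^ (2 * n) := by ring
    _ ≤ 8 * (n : ℝ) ^ (2 * n) := by gcongr

theorem choose_add_one_sq_le (n : ℕ) :
    (((n + 1) ^ 2).choose (n + 1) : ℝ) ≤ 8 * (n + 1) * (n ^ 2 + n).choose n := by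
  have hlower := Nat.pow_le_choose (α := ℝ) n (n ^ 2 + n)
  rw [show n ^ 2 + n + 1 - n = n ^ 2 + 1 by omega] at hlower
  push_cast at hlower
  have hfac : ((n + 1).factorial : ℝ) = (n + 1) * n.factorial := by
    push_cast [Nat.factorial_succ]; ring
  calc (((n + 1) ^ 2).choose (n + 1) : ℝ)
      ≤ (((n + 1) ^ 2 : ℕ) : ℝ) ^ (n + 1) / (n + 1).factorial := Nat.choose_le_pow_div _ _
    _ = (n + 1) * ((n + 1) ^ (2 * n) / n.factorial) := by
        rw [hfac]; push_cast; rw [← pow_mul]; field_simp; ring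
    _ ≤ (n + 1) * (8 * ((n : ℝ) ^ 2 + 1) ^ n / n.factorial) := by
        gcongr
        calc ((n : ℝ) + 1) ^ (2 * n) ≤ 8 * (n : ℝ) ^ (2 * n) := add_one_pow_two_mul_le_eight_mul n
          _ ≤ 8 * ((n : ℝ) ^ 2 + 1) ^ n := by rw [pow_mul]; gcongr; linarith
    _ ≤ 8 * (n + 1) * (n ^ 2 + n).choose n := by
        rw [mul_div_assoc]; nlinarith [hlower]

theorem stmt10 :
    ∃ c : ℝ, 0 < c ∧ ∀ m : ℕ, 1 ≤ m → ∀ A ∈ Svec m,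
      c * ((Svec m).card : ℝ) ≤
        (((Svec m).filter fun B =>
          (Finset.univ.filter fun i => A i ≠ 0 ∧ B i ≠ 0).card = 1).card : ℝ) := by
  refine ⟨1 / 8, by norm_num, fun m hm A hA => ?_⟩
  rw [card_Svec, card_filter_Svec_card_inter_support_eq_one hm hA]
  obtain ⟨n, rfl⟩ := Nat.exists_eq_add_of_le' hm
  rw [Nat.add_sub_cancel, show (n + 1) ^ 2 - (n + 1) = n ^ 2 + n from
    Nat.sub_eq_of_eq_add (by ring)]
  push_cast
  calc 1 / 8 * ((((n + 1) ^ 2).choose (n + 1) : ℝ) * 2 ^ (n + 1))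
      ≤ 1 / 8 * (8 * (n + 1) * (n ^ 2 + n).choose n * 2 ^ (n + 1)) := by
        gcongr; exact choose_add_one_sq_le n
    _ = (n + 1) * (n ^ 2 + n).choose n * 2 ^ (n + 1) := by ring
end

section
/- Khintchine lower bound: let ε_1, …, ε_m be independent Rademacher (uniform ±1) random variables. Then E|∑_{i=1}^m ε_i| ≥ √m / √2. -/
/-!
Write `S_m` for the sum of `m` independent random signs. Conditioning on the last sign and using
`|x - 1| + |x + 1| = 2 |x| + 2 [x = 0]` for integers `x` gives
`E|S_{m+1}| ≥ E|S_m| + P(S_m = 0)`, and `P(S_{2k} = 0) = C(2k, k) / 4^k ≥ √(k + 1) - √k`.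
Summing over even steps telescopes to `E|S_{2k}| ≥ √k`, and one more step gives
`E|S_{2k+1}| ≥ √(k + 1)`; both bounds dominate `√(m / 2)`.
-/

open Finset

theorem Nat.sixteen_pow_le_mul_centralBinom_sq (k : ℕ) :
    16 ^ k ≤ (4 * k + 1) * k.centralBinom ^ 2 := by
  induction k with
  | zero => simp
  | succ k ih =>
    have h := Nat.succ_mul_centralBinom_succ k
    refine Nat.le_of_mul_le_mul_left (c := (k + 1) ^ 2) ?_ (by positivity)
    calc (k + 1) ^ 2 * 16 ^ (k + 1) ≤ (k + 1) ^ 2 * 16 * ((4 * k + 1) * k.centralBinom ^ 2) := by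
          rw [pow_succ 16 k]; nlinarith [ih]
      -- `(4k + 5)(2k + 1)^2 = 4(k + 1)^2(4k + 1) + 1`
      _ ≤ (4 * k + 5) * (2 * (2 * k + 1) * k.centralBinom) ^ 2 := by
          nlinarith [Nat.zero_le (k.centralBinom ^ 2)]
      _ = _ := by rw [← h]; ring

theorem sqrt_succ_le_sqrt_add_centralBinom_div (k : ℕ) :
    √(k + 1) ≤ √k + k.centralBinom / 4 ^ k := by
  set a := √k
  set b := √(k + 1)
  set c : ℝ := k.centralBinom / 4 ^ k
  have hc : 1 ≤ (4 * k + 1) * c ^ 2 := by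
    have h : (16 : ℝ) ^ k ≤ (4 * k + 1) * k.centralBinom ^ 2 := by
      exact_mod_cast Nat.sixteen_pow_le_mul_centralBinom_sq k
    rw [show (16 : ℝ) ^ k = (4 ^ k) ^ 2 by rw [← pow_mul, mul_comm, pow_mul]; norm_num] at h
    rw [div_pow, mul_div_assoc', le_div_iff₀ (by positivity)]
    linarith
  have ha : a ^ 2 = k := Real.sq_sqrt (by positivity)
  have hb : b ^ 2 = k + 1 := Real.sq_sqrt (by positivity)
  have hab : (k : ℝ) ≤ a * b := by
    rw [← Real.sqrt_mul (by positivity)]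
    exact Real.le_sqrt_of_sq_le (by nlinarith)
  -- `b - a = 1 / (a + b)` and `(a + b)^2 ≥ 4k + 1`
  have hsq : (b - a) ^ 2 ≤ c ^ 2 := by
    have h1 : (b - a) ^ 2 * (a + b) ^ 2 = 1 := by nlinarith
    have h2 : 4 * k + 1 ≤ (a + b) ^ 2 := by nlinarith
    nlinarith [sq_nonneg (b - a)]
  linarith [le_of_pow_le_pow_left₀ two_ne_zero (by positivity) hsq]

theorem two_mul_abs_add_ite_le (x : ℝ) :
    2 * |x| + (if x = 0 then 2 else 0) ≤ |x - 1| + |x + 1| := by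
  split_ifs with hx
  · norm_num [hx]
  · calc 2 * |x| + 0 = |(x - 1) + (x + 1)| := by rw [add_zero, ← abs_two, ← abs_mul]; ring_nf
      _ ≤ |x - 1| + |x + 1| := abs_add_le _ _

namespace Rademacher

def signs (m : ℕ) : Finset (Fin m → ℤ) :=
  Fintype.piFinset fun _ => {-1, 1}

noncomputable def meanAbsSum (m : ℕ) : ℝ :=
  (1 / 2 ^ m : ℝ) * ∑ ε ∈ signs m, |∑ i, (ε i : ℝ)|

theorem sum_signs_succ {M : Type*} [AddCommMonoid M] (m : ℕ) (f : ℝ → M) :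
    ∑ ε ∈ signs (m + 1), f (∑ i, (ε i : ℝ)) =
      ∑ ε ∈ signs m, (f (∑ i, (ε i : ℝ) - 1) + f (∑ i, (ε i : ℝ) + 1)) := by
  have h := filter_piFinset_eq_map_consEquiv (fun _ : Fin (m + 1) => ({-1, 1} : Finset ℤ))
    (fun _ => True)
  simp only [filter_true_of_mem fun _ _ => trivial] at h
  rw [signs, h, sum_map, sum_product, sum_pair (by norm_num), ← sum_add_distrib]
  refine sum_congr rfl fun ε _ => ?_
  simp [Fin.sum_univ_succ, add_comm, sub_eq_add_neg]

theorem meanAbsSum_add_card_div_le (m : ℕ) :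
    meanAbsSum m + #{ε ∈ signs m | ∑ i, (ε i : ℝ) = 0} / 2 ^ m ≤ meanAbsSum (m + 1) := by
  rw [meanAbsSum, meanAbsSum, sum_signs_succ]
  calc _ = (1 / 2 ^ (m + 1) : ℝ) *
        ∑ ε ∈ signs m, (2 * |∑ i, (ε i : ℝ)| + if ∑ i, (ε i : ℝ) = 0 then 2 else 0) := by
        rw [sum_add_distrib, ← mul_sum, sum_ite, sum_const_zero, sum_const, nsmul_eq_mul]
        field_simp
        ring
    _ ≤ _ := by
        refine mul_le_mul_of_nonneg_left (sum_le_sum fun ε _ => ?_) (by positivity)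
        exact two_mul_abs_add_ite_le _

theorem centralBinom_le_card_sum_eq_zero (k : ℕ) :
    k.centralBinom ≤ #{ε ∈ signs (2 * k) | ∑ i, (ε i : ℝ) = 0} := by
  have h := card_powersetCard k (univ : Finset (Fin (2 * k)))
  rw [card_univ, Fintype.card_fin] at h
  rw [Nat.centralBinom_eq_two_mul_choose, ← h]
  refine card_le_card_of_injOn (fun s i => if i ∈ s then 1 else -1) (fun s hs => ?_) ?_
  · rw [mem_coe, mem_powersetCard_univ] at hs
    simp only [mem_coe, mem_filter, signs, Fintype.mem_piFinset]
    refine ⟨fun i => by split_ifs <;> simp, ?_⟩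
    simp [sum_ite, filter_not, card_sdiff, hs, two_mul]
  · intro s _ t _ hst
    ext i
    have h := congrFun hst i
    by_cases hs : i ∈ s <;> by_cases ht : i ∈ t <;> simp [hs, ht] at h ⊢

theorem sqrt_succ_le_meanAbsSum_two_mul_add_one {k : ℕ} (h : √k ≤ meanAbsSum (2 * k)) :
    √(k + 1) ≤ meanAbsSum (2 * k + 1) := by
  have hZ : (k.centralBinom / 4 ^ k : ℝ) ≤
      #{ε ∈ signs (2 * k) | ∑ i, (ε i : ℝ) = 0} / 2 ^ (2 * k) := by
    rw [pow_mul, show (2 : ℝ) ^ 2 = 4 by norm_num]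
    gcongr
    exact_mod_cast centralBinom_le_card_sum_eq_zero k
  linarith [sqrt_succ_le_sqrt_add_centralBinom_div k, meanAbsSum_add_card_div_le (2 * k)]

theorem sqrt_le_meanAbsSum_two_mul (k : ℕ) : √k ≤ meanAbsSum (2 * k) := by
  induction k with
  | zero => simp [meanAbsSum, signs]
  | succ k ih =>
    have h := meanAbsSum_add_card_div_le (2 * k + 1)
    have : (0 : ℝ) ≤ #{ε ∈ signs (2 * k + 1) | ∑ i, (ε i : ℝ) = 0} / 2 ^ (2 * k + 1) := by
      positivity
    push_cast
    rw [Nat.mul_succ]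
    linarith [sqrt_succ_le_meanAbsSum_two_mul_add_one ih]

end Rademacher

theorem stmt13 (m : ℕ) :
    Real.sqrt m / Real.sqrt 2 ≤
      (1 / 2 ^ m : ℝ) *
        ∑ ε ∈ Fintype.piFinset (fun _ : Fin m => ({-1, 1} : Finset ℤ)),
          |∑ i, (ε i : ℝ)| := by
  change √m / √2 ≤ Rademacher.meanAbsSum m
  rw [← Real.sqrt_div' _ zero_le_two]
  obtain ⟨k, rfl | rfl⟩ := Nat.even_or_odd' m
  · simpa using Rademacher.sqrt_le_meanAbsSum_two_mul k
  · refine le_trans (Real.sqrt_le_sqrt ?_) (Rademacher.sqrt_succ_le_meanAbsSum_two_mul_add_one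
      (Rademacher.sqrt_le_meanAbsSum_two_mul k))
    push_cast
    linarith
end
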